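/- Let G > 0 and ν ∈ ℝ with ν ≠ 1/2, set λ = 2Gν/(1−2ν) and E = 2G(1+ν), and let F, a, b, I be real constants with I ≠ 0, a > 0 and b > 0. Bishop's full cantilever displacement field u, with u_x = −(Fν/(EI))·x·y·z, u_y = (F/(EI))·[ (ν/2)(x² − y²)·z − z³/6 ], and u_z = (F/(EI))·[ (1/2)·y·(νx² + z²) + (ν/6)·y³ + (1+ν)·(b²y − y³/3) − (a²ν/3)·y − (4a³ν/π³)·Σ_{n=1}^{∞} ((−1)ⁿ/n³)·cos(nπx/a)·sinh(nπy/a)/cosh(nπb/a) ], satisfies the homogeneous Navier–Cauchy equations G·Δu + (λ+G)·∇(div u) = 0 at every point of the domain ℝ × (−b, b) × ℝ. -/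

import Mathlib

/-- Partial derivative of `f(x,y,z)` with respect to the first variable. -/
noncomputable def pd1 (f : ℝ → ℝ → ℝ → ℝ) : ℝ → ℝ → ℝ → ℝ :=
  fun x y z => deriv (fun t => f t y z) x

/-- Partial derivative of `f(x,y,z)` with respect to the second variable. -/
noncomputable def pd2 (f : ℝ → ℝ → ℝ → ℝ) : ℝ → ℝ → ℝ → ℝ :=
  fun x y z => deriv (fun t => f x t z) y

/-- Partial derivative of `f(x,y,z)` with respect to the third variable. -/
noncomputable def pd3 (f : ℝ → ℝ → ℝ → ℝ) : ℝ → ℝ → ℝ → ℝ :=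
  fun x y z => deriv (fun t => f x y t) z

/-- Laplacian `Δf = f_{,xx} + f_{,yy} + f_{,zz}` of a scalar field on `ℝ³`. -/
noncomputable def lap3 (f : ℝ → ℝ → ℝ → ℝ) : ℝ → ℝ → ℝ → ℝ :=
  fun x y z => pd1 (pd1 f) x y z + pd2 (pd2 f) x y z + pd3 (pd3 f) x y z

/-- Divergence `div u = ∂_x u_x + ∂_y u_y + ∂_z u_z` of a vector field on `ℝ³`. -/
noncomputable def div3 (ux uy uz : ℝ → ℝ → ℝ → ℝ) : ℝ → ℝ → ℝ → ℝ :=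
  fun x y z => pd1 ux x y z + pd2 uy x y z + pd3 uz x y z

open Real

/-!
Apart from the series, `u` is polynomial, and a direct computation gives, with
`c = F / (E I)`, `div u = c (1 - 2ν) y z` and `Δu = -c (0, z, y)`; since `(λ + G)(1 - 2ν) = G`
the equations hold for the polynomial field. The series is a superposition of the modes
`cos (k x) sinh (k y)`, each harmonic in `(x, y)`. Its coefficients decay like `exp (-k b)`, so
on `|y| ≤ r < b` the series can be differentiated twice term by term, and its Laplacian vanishes
as well.
-/

open Filter Topology

lemma abs_sinh_le_cosh (u : ℝ) : |sinh u| ≤ cosh u := by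
  rw [abs_sinh, ← cosh_abs]
  exact (sinh_lt_cosh _).le

lemma cosh_le_exp_abs (u : ℝ) : cosh u ≤ exp |u| := by
  rw [← cosh_abs, cosh_eq]
  have : exp (-|u|) ≤ exp |u| := exp_le_exp.2 (by linarith [abs_nonneg u])
  linarith

lemma cosh_le_two_mul_exp_mul_cosh (u v : ℝ) : cosh u ≤ 2 * exp (|u| - |v|) * cosh v := by
  calc cosh u ≤ exp (|u| - |v|) * exp |v| := by
        rw [← exp_add, sub_add_cancel]
        exact cosh_le_exp_abs u
    _ ≤ exp (|u| - |v|) * (2 * cosh v) := by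
        gcongr
        rw [cosh_eq]
        linarith [exp_abs_le v]
    _ = 2 * exp (|u| - |v|) * cosh v := by ring

lemma cosh_mul_le_cosh_mul (k : ℝ) {y r : ℝ} (h : |y| ≤ r) :
    cosh (k * y) ≤ cosh (k * r) := by
  rw [cosh_le_cosh, abs_mul, abs_mul]
  exact mul_le_mul_of_nonneg_left (h.trans (le_abs_self r)) (abs_nonneg k)

lemma abs_mul_le_abs_mul_one_add_abs (a b : ℝ) : |a * b| ≤ |a| * (1 + |b|) := by
  rw [abs_mul]
  gcongr
  linarith

lemma abs_mul_cosh_le (c k r : ℝ) : |c| * cosh (k * r) ≤ |c| * (1 + |k|) * cosh (k * r) := by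
  gcongr
  exact le_mul_of_one_le_right (abs_nonneg c) (by linarith [abs_nonneg k])

-- Second partials are taken along the coordinate lines, as in `pd1` and `pd2`.
def HasVanishingLaplacianAt (S : ℝ → ℝ → ℝ) (x y : ℝ) : Prop :=
  ∃ (Sx Sy : ℝ → ℝ) (sxx syy : ℝ),
    (∀ᶠ t in 𝓝 x, HasDerivAt (fun s => S s y) (Sx t) t) ∧ HasDerivAt Sx sxx x ∧
    (∀ᶠ t in 𝓝 y, HasDerivAt (S x) (Sy t) t) ∧ HasDerivAt Sy syy y ∧ sxx + syy = 0

noncomputable def modeSeries (c k : ℕ → ℝ) (f g : ℝ → ℝ) (x y : ℝ) : ℝ :=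
  ∑' n, c n * (f (k n * x) * g (k n * y))

lemma modeSeries_neg_left (c k : ℕ → ℝ) (f g : ℝ → ℝ) (x y : ℝ) :
    modeSeries c k (fun u => -f u) g x y = -modeSeries c k f g x y := by
  simp only [modeSeries, ← tsum_neg]
  congr 1
  ext n
  ring

section ModeSeries

variable {c k : ℕ → ℝ} {f f' g g' : ℝ → ℝ} {r : ℝ}

lemma norm_modeSeries_term_le (hf : ∀ u, |f u| ≤ 1) (hg : ∀ u, |g u| ≤ cosh u) (n : ℕ) (x : ℝ)
    {y : ℝ} (hy : |y| ≤ r) : ‖c n * (f (k n * x) * g (k n * y))‖ ≤ |c n| * cosh (k n * r) := by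
  rw [Real.norm_eq_abs, abs_mul, abs_mul]
  gcongr
  calc |f (k n * x)| * |g (k n * y)| ≤ 1 * cosh (k n * y) :=
        mul_le_mul (hf _) (hg _) (abs_nonneg _) zero_le_one
    _ ≤ cosh (k n * r) := by rw [one_mul]; exact cosh_mul_le_cosh_mul _ hy

lemma hasDerivAt_modeSeries_left (hf : ∀ u, HasDerivAt f (f' u) u) (hf1 : ∀ u, |f u| ≤ 1)
    (hf'1 : ∀ u, |f' u| ≤ 1) (hg : ∀ u, |g u| ≤ cosh u)
    (hc : Summable fun n => |c n| * (1 + |k n|) * cosh (k n * r)) {y : ℝ} (hy : |y| ≤ r)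
    (x : ℝ) :
    HasDerivAt (fun t => modeSeries c k f g t y)
      (modeSeries (fun n => c n * k n) k f' g x y) x := by
  refine hasDerivAt_tsum (g := fun n t => c n * (f (k n * t) * g (k n * y)))
    (g' := fun n t => c n * k n * (f' (k n * t) * g (k n * y))) hc (fun n t => ?_) (fun n t => ?_)
    (hc.of_norm_bounded fun n =>
      (norm_modeSeries_term_le hf1 hg n 0 hy).trans (abs_mul_cosh_le _ _ _)) x
  · have := (((hf (k n * t)).comp t ((hasDerivAt_id t).const_mul (k n))).mul_const
      (g (k n * y))).const_mul (c n)
    exact this.congr_deriv (by simp only [mul_one]; ring)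
  · refine (norm_modeSeries_term_le (c := fun n => c n * k n) hf'1 hg n t hy).trans ?_
    gcongr
    exact abs_mul_le_abs_mul_one_add_abs _ _

lemma hasDerivAt_modeSeries_right (hg : ∀ u, HasDerivAt g (g' u) u) (hf : ∀ u, |f u| ≤ 1)
    (hg1 : ∀ u, |g u| ≤ cosh u) (hg'1 : ∀ u, |g' u| ≤ cosh u)
    (hc : Summable fun n => |c n| * (1 + |k n|) * cosh (k n * r)) (x : ℝ) {y : ℝ}
    (hy : |y| < r) :
    HasDerivAt (modeSeries c k f g x) (modeSeries (fun n => c n * k n) k f g' x y) y := by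
  have hmem : y ∈ Set.Ioo (-r) r := abs_lt.1 hy
  refine hasDerivAt_tsum_of_isPreconnected (g := fun n t => c n * (f (k n * x) * g (k n * t)))
    (g' := fun n t => c n * k n * (f (k n * x) * g' (k n * t))) hc isOpen_Ioo isPreconnected_Ioo
    (fun n t _ => ?_) (fun n t ht => ?_) hmem
    (hc.of_norm_bounded fun n =>
      (norm_modeSeries_term_le hf hg1 n x hy.le).trans (abs_mul_cosh_le _ _ _)) hmem
  · have := (((hg (k n * t)).comp t ((hasDerivAt_id t).const_mul (k n))).const_mul
      (f (k n * x))).const_mul (c n)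
    exact this.congr_deriv (by simp only [mul_one]; ring)
  · refine (norm_modeSeries_term_le (c := fun n => c n * k n) hf hg'1 n x
      (abs_lt.2 ht).le).trans ?_
    gcongr
    exact abs_mul_le_abs_mul_one_add_abs _ _

lemma hasVanishingLaplacianAt_modeSeries
    (hc : Summable fun n => |c n| * (1 + |k n|) ^ 2 * cosh (k n * r)) (x : ℝ) {y : ℝ}
    (hy : |y| < r) : HasVanishingLaplacianAt (modeSeries c k cos sinh) x y := by
  have hc₀ : Summable fun n => |c n| * (1 + |k n|) * cosh (k n * r) :=
    hc.of_nonneg_of_le (fun n => by positivity) fun n => by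
      gcongr
      nlinarith [abs_nonneg (k n)]
  have hc₁ : Summable fun n => |c n * k n| * (1 + |k n|) * cosh (k n * r) :=
    hc.of_nonneg_of_le (fun n => by positivity) fun n => by
      rw [sq, ← mul_assoc]
      gcongr
      exact abs_mul_le_abs_mul_one_add_abs _ _
  have hcosh (u : ℝ) : |cosh u| ≤ cosh u := (abs_of_pos (cosh_pos u)).le
  have hsin (u : ℝ) : |-sin u| ≤ 1 := by rw [abs_neg]; exact abs_sin_le_one u
  have hcos (u : ℝ) : |-cos u| ≤ 1 := by rw [abs_neg]; exact abs_cos_le_one u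
  refine ⟨fun t => modeSeries (fun n => c n * k n) k (fun u => -sin u) sinh t y,
    modeSeries (fun n => c n * k n) k cos cosh x,
    -modeSeries (fun n => c n * k n * k n) k cos sinh x y,
    modeSeries (fun n => c n * k n * k n) k cos sinh x y, ?_, ?_, ?_, ?_, neg_add_cancel _⟩
  · exact Eventually.of_forall (hasDerivAt_modeSeries_left hasDerivAt_cos abs_cos_le_one hsin
      abs_sinh_le_cosh hc₀ hy.le)
  · rw [← modeSeries_neg_left]
    exact hasDerivAt_modeSeries_left (fun u => (hasDerivAt_sin u).neg) hsin hcos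
      abs_sinh_le_cosh hc₁ hy.le x
  · filter_upwards [isOpen_Ioo.mem_nhds (abs_lt.1 hy)] with t ht
    exact hasDerivAt_modeSeries_right hasDerivAt_sinh abs_cos_le_one abs_sinh_le_cosh hcosh hc₀ x
      (abs_lt.2 ht)
  · exact hasDerivAt_modeSeries_right hasDerivAt_cosh abs_cos_le_one hcosh abs_sinh_le_cosh hc₁
      x hy

end ModeSeries

noncomputable def bishopWavenumber (a : ℝ) (n : ℕ) : ℝ := ((n : ℝ) + 1) * π / a

noncomputable def bishopCoeff (a b : ℝ) (n : ℕ) : ℝ :=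
  (-1 : ℝ) ^ (n + 1) / (((n : ℝ) + 1) ^ 3 * cosh (bishopWavenumber a n * b))

-- The series of `u_z` spelled exactly as in the statement, so that `u_z` unfolds to it.
noncomputable def bishopSeries (a b x y : ℝ) : ℝ :=
  ∑' n : ℕ, (-1 : ℝ) ^ (n + 1) / ((n : ℝ) + 1) ^ 3 *
    (cos ((n + 1) * π * x / a) * sinh ((n + 1) * π * y / a) / cosh ((n + 1) * π * b / a))

lemma bishopSeries_eq_modeSeries (a b : ℝ) :
    bishopSeries a b = modeSeries (bishopCoeff a b) (bishopWavenumber a) cos sinh := by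
  funext x y
  refine tsum_congr fun n => ?_
  simp only [bishopCoeff, bishopWavenumber, div_mul_eq_mul_div]
  field_simp

lemma summable_bishopCoeff {a b r : ℝ} (ha : 0 < a) (hr : 0 ≤ r) (hrb : r < b) :
    Summable fun n => |bishopCoeff a b n| * (1 + |bishopWavenumber a n|) ^ 2 *
      cosh (bishopWavenumber a n * r) := by
  set q := exp (-(π / a * (b - r)))
  have hq : q < 1 := exp_lt_one_iff.2 (by have := div_pos pi_pos ha; nlinarith)
  have hgeom : Summable fun n : ℕ => 2 * (1 + π / a) ^ 2 * q ^ (n + 1) :=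
    ((summable_nat_add_iff 1).2 (summable_geometric_of_lt_one (exp_pos _).le hq)).mul_left _
  refine hgeom.of_nonneg_of_le (fun n => by positivity) fun n => ?_
  have hN : (1 : ℝ) ≤ n + 1 := by linarith [n.cast_nonneg (α := ℝ)]
  have hk : bishopWavenumber a n = (n + 1) * (π / a) := by rw [bishopWavenumber, mul_div_assoc]
  have hk0 : 0 ≤ bishopWavenumber a n := by rw [hk]; positivity
  have hcoeff : |bishopCoeff a b n| = 1 / ((n + 1) ^ 3 * cosh (bishopWavenumber a n * b)) := by
    rw [bishopCoeff, abs_div, abs_pow, abs_neg, abs_one, one_pow,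
      abs_of_pos (by positivity)]
  have hexp : exp (|bishopWavenumber a n * r| - |bishopWavenumber a n * b|) = q ^ (n + 1) := by
    rw [abs_of_nonneg (by positivity), abs_of_nonneg (by nlinarith), ← exp_nat_mul, hk]
    push_cast
    ring_nf
  have hpoly : (1 + bishopWavenumber a n) ^ 2 ≤ (n + 1) ^ 3 * (1 + π / a) ^ 2 := by
    rw [hk]
    have h1 : 1 + (n + 1) * (π / a) ≤ (n + 1) * (1 + π / a) := by nlinarith
    calc (1 + (n + 1) * (π / a)) ^ 2 ≤ ((n + 1) * (1 + π / a)) ^ 2 :=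
        pow_le_pow_left₀ (by positivity) h1 2
      _ ≤ (n + 1) ^ 3 * (1 + π / a) ^ 2 := by
          rw [mul_pow]
          exact mul_le_mul_of_nonneg_right (pow_le_pow_right₀ hN (by norm_num)) (by positivity)
  have hcosh := cosh_le_two_mul_exp_mul_cosh (bishopWavenumber a n * r) (bishopWavenumber a n * b)
  rw [hexp] at hcosh
  rw [hcoeff, abs_of_nonneg hk0]
  calc 1 / ((n + 1) ^ 3 * cosh (bishopWavenumber a n * b)) * (1 + bishopWavenumber a n) ^ 2 *
        cosh (bishopWavenumber a n * r)
      ≤ 1 / ((n + 1) ^ 3 * cosh (bishopWavenumber a n * b)) * ((n + 1) ^ 3 * (1 + π / a) ^ 2) *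
        (2 * q ^ (n + 1) * cosh (bishopWavenumber a n * b)) := by gcongr
    _ = 2 * (1 + π / a) ^ 2 * q ^ (n + 1) := by
        field_simp

lemma hasVanishingLaplacianAt_bishopSeries {a b y : ℝ} (ha : 0 < a) (hy : |y| < b) (x : ℝ) :
    HasVanishingLaplacianAt (bishopSeries a b) x y := by
  rw [bishopSeries_eq_modeSeries]
  have hr : 0 ≤ (|y| + b) / 2 := by linarith [abs_nonneg y]
  exact hasVanishingLaplacianAt_modeSeries (summable_bishopCoeff ha hr (by linarith)) x
    (by linarith)

lemma lap3_const_mul_mul_mul (k x y z : ℝ) : lap3 (fun x y z => k * x * y * z) x y z = 0 := by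
  simp [lap3, pd1, pd2, pd3]

lemma lap3_bishop_uy (c ν x y z : ℝ) :
    lap3 (fun x y z => c * (ν / 2 * (x ^ 2 - y ^ 2) * z - z ^ 3 / 6)) x y z = -c * z := by
  set u : ℝ → ℝ → ℝ → ℝ := fun x y z => c * (ν / 2 * (x ^ 2 - y ^ 2) * z - z ^ 3 / 6)
  have h1 : pd1 u = fun x y z => c * (ν * x * z) := by
    funext; simp (disch := fun_prop) [u, pd1, -mul_eq_mul_left_iff]; ring
  have h2 : pd2 u = fun x y z => -(c * (ν * y * z)) := by
    funext; simp (disch := fun_prop) [u, pd2, -mul_eq_mul_left_iff]; ring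
  have h3 : pd3 u = fun x y z => c * (ν / 2 * (x ^ 2 - y ^ 2) - z ^ 2 / 2) := by
    funext; simp (disch := fun_prop) [u, pd3, -mul_eq_mul_left_iff]; ring
  simp only [lap3, h1, h2, h3]
  simp [pd1, pd2, pd3, -mul_eq_mul_left_iff]

noncomputable def bishopAxialPoly (ν a b x y z : ℝ) : ℝ :=
  1 / 2 * y * (ν * x ^ 2 + z ^ 2) + ν / 6 * y ^ 3 + (1 + ν) * (b ^ 2 * y - y ^ 3 / 3) -
    a ^ 2 * ν / 3 * y

lemma lap3_bishop_uz {S : ℝ → ℝ → ℝ} {c ν a b K x y : ℝ}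
    (hS : HasVanishingLaplacianAt S x y) (z : ℝ) :
    lap3 (fun x y z => c * (bishopAxialPoly ν a b x y z - K * S x y)) x y z = -c * y := by
  obtain ⟨Sx, Sy, sxx, syy, hSx, hSxx, hSy, hSyy, hsum⟩ := hS
  set u : ℝ → ℝ → ℝ → ℝ := fun x y z => c * (bishopAxialPoly ν a b x y z - K * S x y)
  have hxx : pd1 (pd1 u) x y z = c * (ν * y - K * sxx) := by
    have hP (t : ℝ) : HasDerivAt (fun s => bishopAxialPoly ν a b s y z) (ν * t * y) t :=
      (hasDerivAt_deriv_iff.2 (by unfold bishopAxialPoly; fun_prop)).congr_deriv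
        (by simp (disch := fun_prop) [bishopAxialPoly]; ring)
    have h1 : (fun t => pd1 u t y z) =ᶠ[𝓝 x] fun t => c * (ν * t * y - K * Sx t) :=
      hSx.mono fun t ht => (((hP t).sub (ht.const_mul K)).const_mul c).deriv
    have h2 : HasDerivAt (fun t => c * (ν * t * y - K * Sx t)) (c * (ν * y - K * sxx)) x := by
      have := (((hasDerivAt_id x).const_mul ν).mul_const y).sub (hSxx.const_mul K)
      exact (this.const_mul c).congr_deriv (by ring)
    exact h1.deriv_eq.trans h2.deriv
  have hyy : pd2 (pd2 u) x y z = c * (ν * y - 2 * (1 + ν) * y - K * syy) := by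
    set Q : ℝ → ℝ := fun t =>
      1 / 2 * (ν * x ^ 2 + z ^ 2) + ν / 2 * t ^ 2 + (1 + ν) * (b ^ 2 - t ^ 2) - a ^ 2 * ν / 3
    have hP (t : ℝ) : HasDerivAt (fun s => bishopAxialPoly ν a b x s z) (Q t) t :=
      (hasDerivAt_deriv_iff.2 (by unfold bishopAxialPoly; fun_prop)).congr_deriv
        (by simp (disch := fun_prop) [bishopAxialPoly, Q]; ring)
    have hQ : HasDerivAt Q (ν * y - 2 * (1 + ν) * y) y :=
      (hasDerivAt_deriv_iff.2 (by fun_prop)).congr_deriv (by simp (disch := fun_prop) [Q]; ring)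
    have h1 : (fun t => pd2 u x t z) =ᶠ[𝓝 y] fun t => c * (Q t - K * Sy t) :=
      hSy.mono fun t ht => (((hP t).sub (ht.const_mul K)).const_mul c).deriv
    exact h1.deriv_eq.trans ((hQ.sub (hSyy.const_mul K)).const_mul c).deriv
  have hzz : pd3 (pd3 u) x y z = c * y := by
    have h1 : (fun t => pd3 u x y t) = fun t => c * (y * t) := by
      funext t
      simp (disch := fun_prop) [u, pd3, bishopAxialPoly, -mul_eq_mul_left_iff]
      ring
    show deriv (fun t => pd3 u x y t) z = _
    simp [h1]
  rw [lap3, hxx, hyy, hzz]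
  linear_combination (-c * K) * hsum

theorem bishop_full_navier_cauchy_general (G ν F I a b : ℝ)
    (hν : ν ≠ 1 / 2) (ha : 0 < a) :
    let lam := 2 * G * ν / (1 - 2 * ν)
    let E := 2 * G * (1 + ν)
    let ux : ℝ → ℝ → ℝ → ℝ := fun x y z => -(F * ν / (E * I)) * x * y * z
    let uy : ℝ → ℝ → ℝ → ℝ := fun x y z =>
      F / (E * I) * (ν / 2 * (x ^ 2 - y ^ 2) * z - z ^ 3 / 6)
    let uz : ℝ → ℝ → ℝ → ℝ := fun x y z =>
      F / (E * I) * (1 / 2 * y * (ν * x ^ 2 + z ^ 2) + ν / 6 * y ^ 3 +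
        (1 + ν) * (b ^ 2 * y - y ^ 3 / 3) - a ^ 2 * ν / 3 * y -
        4 * a ^ 3 * ν / π ^ 3 *
          ∑' n : ℕ, (-1 : ℝ) ^ (n + 1) / ((n : ℝ) + 1) ^ 3 *
            (Real.cos ((n + 1) * π * x / a) * Real.sinh ((n + 1) * π * y / a) /
              Real.cosh ((n + 1) * π * b / a)))
    ∀ x y z : ℝ, y ∈ Set.Ioo (-b) b →
      G * lap3 ux x y z + (lam + G) * pd1 (div3 ux uy uz) x y z = 0 ∧
      G * lap3 uy x y z + (lam + G) * pd2 (div3 ux uy uz) x y z = 0 ∧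
      G * lap3 uz x y z + (lam + G) * pd3 (div3 ux uy uz) x y z = 0 := by
  intro lam E ux uy uz x y z hy
  set c := F / (E * I)
  have hlam : (lam + G) * (1 - 2 * ν) = G := by
    have : 1 - 2 * ν ≠ 0 := by contrapose! hν; linarith
    simp only [lam]
    field_simp
    ring
  have hdiv : div3 ux uy uz = fun x y z => c * (1 - 2 * ν) * (y * z) := by
    funext x y z
    simp (disch := fun_prop) [div3, pd1, pd2, pd3, ux, uy, uz, -mul_eq_mul_left_iff]
    ring
  have hux : lap3 ux x y z = 0 := lap3_const_mul_mul_mul _ x y z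
  have huy : lap3 uy x y z = -c * z := lap3_bishop_uy c ν x y z
  have huz : lap3 uz x y z = -c * y :=
    lap3_bishop_uz (S := bishopSeries a b)
      (hasVanishingLaplacianAt_bishopSeries ha (abs_lt.2 hy) x) z
  have hdx : pd1 (div3 ux uy uz) x y z = 0 := by simp [hdiv, pd1]
  have hdy : pd2 (div3 ux uy uz) x y z = c * (1 - 2 * ν) * z := by simp [hdiv, pd2]
  have hdz : pd3 (div3 ux uy uz) x y z = c * (1 - 2 * ν) * y := by simp [hdiv, pd3]
  refine ⟨?_, ?_, ?_⟩
  · rw [hux, hdx]; ring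
  · rw [huy, hdy]; linear_combination c * z * hlam
  · rw [huz, hdz]; linear_combination c * y * hlam

/-- Bishop's full cantilever displacement field — including the harmonic series
term in the axial component `u_z` — satisfies the homogeneous Navier–Cauchy
equations `G·Δu + (λ+G)·∇(div u) = 0` at every point of the domain
`ℝ × (−b,b) × ℝ`, where `λ = 2Gν/(1−2ν)` and `E = 2G(1+ν)`. -/
theorem bishop_full_navier_cauchy (G ν F I a b : ℝ)
    (hG : 0 < G) (hν : ν ≠ 1 / 2) (hI : I ≠ 0) (ha : 0 < a) (hb : 0 < b) :
    let lam := 2 * G * ν / (1 - 2 * ν)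
    let E := 2 * G * (1 + ν)
    let ux : ℝ → ℝ → ℝ → ℝ := fun x y z => -(F * ν / (E * I)) * x * y * z
    let uy : ℝ → ℝ → ℝ → ℝ := fun x y z =>
      F / (E * I) * (ν / 2 * (x ^ 2 - y ^ 2) * z - z ^ 3 / 6)
    let uz : ℝ → ℝ → ℝ → ℝ := fun x y z =>
      F / (E * I) * (1 / 2 * y * (ν * x ^ 2 + z ^ 2) + ν / 6 * y ^ 3 +
        (1 + ν) * (b ^ 2 * y - y ^ 3 / 3) - a ^ 2 * ν / 3 * y -
        4 * a ^ 3 * ν / π ^ 3 *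
          ∑' n : ℕ, (-1 : ℝ) ^ (n + 1) / ((n : ℝ) + 1) ^ 3 *
            (Real.cos ((n + 1) * π * x / a) * Real.sinh ((n + 1) * π * y / a) /
              Real.cosh ((n + 1) * π * b / a)))
    ∀ x y z : ℝ, y ∈ Set.Ioo (-b) b →
      G * lap3 ux x y z + (lam + G) * pd1 (div3 ux uy uz) x y z = 0 ∧
      G * lap3 uy x y z + (lam + G) * pd2 (div3 ux uy uz) x y z = 0 ∧
      G * lap3 uz x y z + (lam + G) * pd3 (div3 ux uy uz) x y z = 0 :=
  bishop_full_navier_cauchy_general G ν F I a b hν ha
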